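/- Let α < ω₁ and let C be a Suslin scheme on X ⊆ Y satisfying A(C̄^Y) = X. Then: (i) for even α, R_α(C,Y)∖X = { y ∈ Y∖X : D_iie^{α'}(S_C(y)) ≠ ∅ }; (ii) for odd α, R_α(C,Y)∖X = { y ∈ Y∖X : D_iie^{α'}(S_C(y)) strictly contains {∅} }; (iii) moreover, for any i ∈ ω and odd α, R_{T^c_{α,i}}(C,Y)∖X = { y ∈ Y∖X : D_iie^{α'}(S_C(y)) contains a sequence of length i }, where T^c_{α,i} := {∅} ∪ i⌢T_{α'}. -/

import Mathlib

noncomputable section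
open Classical Set Topology Filter Ordinal

universe u v

namespace FBorelPaper

/-! ### Ordinal parity -/

/-- The first uncountable ordinal. -/
def omega1 : Ordinal.{0} := Ordinal.omega 1

/-- An ordinal `a = λ + m` (with `λ` limit or zero, `m < ω`) is *even* iff `m` is even. -/
def EvenOrd (a : Ordinal.{0}) : Prop := a % 2 = 0

/-- An ordinal `a = λ + m` (with `λ` limit or zero, `m < ω`) is *odd* iff `m` is odd. -/
def OddOrd (a : Ordinal.{0}) : Prop := a % 2 = 1

/-- For `a = λ + 2n + i` (with `λ` limit or zero, `n < ω`, `i ∈ {0,1}`),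
`ordPrime a = λ + n` (the ordinal `α'` of the paper). -/
def ordPrime (a : Ordinal.{0}) : Ordinal.{0} :=
  Ordinal.omega0 * (a / Ordinal.omega0) + (a % Ordinal.omega0) / 2

/-! ### The F-Borel hierarchy -/

/-- The `F`-Borel hierarchy of a topological space: `FBorel Y 0` is the family of closed
sets, and for `0 < a`, `FBorel Y a` consists of all countable unions (for odd `a`),
resp. countable intersections (for even `a`), of members of `⋃ b < a, FBorel Y b`. -/
def FBorel (Y : Type u) [TopologicalSpace Y] : Ordinal.{0} → Set (Set Y) :=
  WellFounded.fix Ordinal.lt_wf (C := fun _ => Set (Set Y)) fun a ih =>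
    if a = 0 then { F | IsClosed F }
    else if EvenOrd a then
      { S | ∃ f : ℕ → Set Y, (∀ n, ∃ b, ∃ h : b < a, f n ∈ ih b h) ∧ S = ⋂ n, f n }
    else
      { S | ∃ f : ℕ → Set Y, (∀ n, ∃ b, ∃ h : b < a, f n ∈ ih b h) ∧ S = ⋃ n, f n }

/-- The list `(σ 0, …, σ (k-1))` of the first `k` values of `σ : ℕ → ℕ`. -/
def seqPrefix (σ : ℕ → ℕ) (k : ℕ) : List ℕ := List.ofFn fun i : Fin k => σ i

/-- A Suslin scheme: a monotone family of sets indexed by finite sequences. -/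
def IsSuslinScheme {Y : Type u} (C : List ℕ → Set Y) : Prop :=
  ∀ ⦃s t : List ℕ⦄, s <+: t → C t ⊆ C s

/-- The Suslin operation `A(C) = ⋃_{σ ∈ ω^ω} ⋂_k C(σ|k)`. -/
def suslinOp {Y : Type u} (C : List ℕ → Set Y) : Set Y :=
  ⋃ σ : ℕ → ℕ, ⋂ k : ℕ, C (seqPrefix σ k)

/-- The Suslin-F subsets of `Y`: results of the Suslin operation applied to schemes of
closed sets. -/
def SuslinF (Y : Type u) [TopologicalSpace Y] : Set (Set Y) :=
  { S | ∃ C : List ℕ → Set Y, (∀ s, IsClosed (C s)) ∧ S = suslinOp C }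

/-- The classes `F_a(Y)` for `a ≤ ω₁`, where `F_{ω₁}(Y)` is the class of Suslin-F sets. -/
def FClass (Y : Type u) [TopologicalSpace Y] (a : Ordinal.{0}) : Set (Set Y) :=
  if a < omega1 then FBorel Y a else SuslinF Y

/-- `ComplIn Y X` is the complexity of `X` in `Y`: the least `a ≤ ω₁` with `X ∈ F_a(Y)`. -/
def ComplIn (Y : Type u) [TopologicalSpace Y] (X : Set Y) : Ordinal.{0} :=
  sInf { a : Ordinal.{0} | a ≤ omega1 ∧ X ∈ FClass Y a }

/-! ### Compactifications, K-analytic spaces, local complexity -/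

/-- `(K, e)` is a compactification of `X`: `K` is compact Hausdorff and `e` is a dense
embedding of `X` into `K`. -/
def IsCompactification (X : Type u) [TopologicalSpace X] (K : Type u) [TopologicalSpace K]
    (e : X → K) : Prop :=
  CompactSpace K ∧ T2Space K ∧ IsEmbedding e ∧ DenseRange e

/-- The set `Compl(X)` of all complexities attained by `X` in its compactifications. -/
def AttainedCompl (X : Type u) [TopologicalSpace X] : Set Ordinal.{0} :=
  { γ | ∃ (K : Type u) (_ : TopologicalSpace K) (e : X → K),
      IsCompactification X K e ∧ Set.range e ∈ SuslinF K ∧ γ = ComplIn K (Set.range e) }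

/-- A topological space is K-analytic iff it embeds as a Suslin-F subset of some compact
Hausdorff space. -/
def IsKAnalytic (X : Type u) [TopologicalSpace X] : Prop :=
  ∃ (K : Type u) (_ : TopologicalSpace K) (e : X → K),
    CompactSpace K ∧ T2Space K ∧ IsEmbedding e ∧ Set.range e ∈ SuslinF K

/-- The local complexity `Compl_y(X, Y)`: the least complexity of `cl(U) ∩ X` in `Y` over
all open neighborhoods `U` of `y` in `Y`. -/
def locComplAt (Y : Type u) [TopologicalSpace Y] (X : Set Y) (y : Y) : Ordinal.{0} :=
  sInf { γ : Ordinal.{0} | ∃ U : Set Y, IsOpen U ∧ y ∈ U ∧ γ = ComplIn Y (closure U ∩ X) }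

/-- The local complexity `Compl_loc(X, Y) = sup_{x ∈ X} Compl_x(X, Y)`. -/
def locCompl (Y : Type u) [TopologicalSpace Y] (X : Set Y) : Ordinal.{0} :=
  ⨆ x : X, locComplAt Y X (x : Y)

/-- The local complexity `Compl_locbar(X, Y) = sup_{y ∈ Y} Compl_y(X, Y)`. -/
def locComplBar (Y : Type u) [TopologicalSpace Y] (X : Set Y) : Ordinal.{0} :=
  ⨆ y : Y, locComplAt Y X y

/-! ### Trees on ω -/

/-- A tree on `ω`: a set of finite sequences closed under initial segments. -/
def IsTree (T : Set (List ℕ)) : Prop := ∀ ⦃s t : List ℕ⦄, s <+: t → t ∈ T → s ∈ T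

/-- A tree is well-founded iff it carries no infinite branch. -/
def WellFoundedTree (T : Set (List ℕ)) : Prop := ¬ ∃ σ : ℕ → ℕ, ∀ k : ℕ, seqPrefix σ k ∈ T

/-- `t` is a leaf of `T`: it belongs to `T` and has no immediate successor in `T`. -/
def IsLeafOf (T : Set (List ℕ)) (t : List ℕ) : Prop := t ∈ T ∧ ∀ n : ℕ, t ++ [n] ∉ T

/-- The tree `T^t = {s | t⌢s ∈ T}` corresponding to `t` in `T`. -/
def subtreeAt (T : Set (List ℕ)) (t : List ℕ) : Set (List ℕ) := { s | t ++ s ∈ T }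

/-- The smallest tree containing a set `S` of finite sequences. -/
def clTr (S : Set (List ℕ)) : Set (List ℕ) := { u | ∃ s ∈ S, u <+: s }

/-- The leaf derivative: keep the elements having some proper extension in `T`. -/
def leafDeriv (T : Set (List ℕ)) : Set (List ℕ) := { t ∈ T | ∃ s ∈ T, t <+: s ∧ t ≠ s }

/-- The derivative `D_iie`: keep the `t ∈ T` admitting infinitely many pairwise
incomparable extensions in `T` of pairwise different lengths. -/
def Diie (T : Set (List ℕ)) : Set (List ℕ) :=
  { t ∈ T | ∃ g : ℕ → List ℕ, (∀ n, g n ∈ T ∧ t <+: g n) ∧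
      ∀ ⦃m n : ℕ⦄, m < n →
        (¬ g m <+: g n) ∧ (¬ g n <+: g m) ∧ (g m).length ≠ (g n).length }

/-- Transfinitely iterated derivative, starting from `cl_Tr S` and taking intersections
at limit stages. -/
def iterDeriv (D : Set (List ℕ) → Set (List ℕ)) (S : Set (List ℕ)) (γ : Ordinal.{0}) :
    Set (List ℕ) :=
  Ordinal.limitRecOn γ (clTr S) (fun _ ih => D ih)
    (fun a _ ih => ⋂ b : Ordinal.{0}, ⋂ h : b < a, ih b h)

/-- The rank associated with the leaf derivative: the least `γ` such that the `(γ+1)`-st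
iterated leaf derivative is empty, and `ω₁` if there is no such countable ordinal. -/
def leafRank (T : Set (List ℕ)) : Ordinal.{0} :=
  if ∃ γ : Ordinal.{0}, γ < omega1 ∧ iterDeriv leafDeriv T (γ + 1) = ∅ then
    sInf { γ : Ordinal.{0} | iterDeriv leafDeriv T (γ + 1) = ∅ }
  else omega1

/-- `E` is the canonical extension of the `l(T)`-scheme `H` to the whole of `T`:
it agrees with `H` on the leaves of `T`, and at a non-leaf `t ∈ T` it is the union
(resp. the intersection) of its values at the immediate successors of `t` in `T` when
the leaf-rank of `T^t` is odd (resp. even). -/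
def IsSchemeExtension (Y : Type u) [TopologicalSpace Y] (T : Set (List ℕ))
    (H E : List ℕ → Set Y) : Prop :=
  (∀ t, IsLeafOf T t → E t = H t) ∧
  (∀ t ∈ T, ¬ IsLeafOf T t → OddOrd (leafRank (subtreeAt T t)) →
      E t = ⋃ n ∈ { n : ℕ | t ++ [n] ∈ T }, E (t ++ [n])) ∧
  (∀ t ∈ T, ¬ IsLeafOf T t → EvenOrd (leafRank (subtreeAt T t)) →
      E t = ⋂ n ∈ { n : ℕ | t ++ [n] ∈ T }, E (t ++ [n]))

/-- `H` (an `l(T)`-scheme of subsets of `X`) is a *universal simple `F_α`-representation*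
of `X`: `r_l(T) ≤ α`, and for every space `Y` containing (a copy of) `X`, the extension
of the scheme of closures `(cl_Y (H t))_t` computes `X` at the root. -/
def HasUniversalSimpleRep (X : Type u) [TopologicalSpace X] (α : Ordinal.{0}) : Prop :=
  ∃ (T : Set (List ℕ)) (H : List ℕ → Set X), IsTree T ∧ WellFoundedTree T ∧ [] ∈ T ∧
    leafRank T ≤ α ∧
    ∀ (Y : Type u) (_ : TopologicalSpace Y) (e : X → Y), IsEmbedding e →
      ∃ E : List ℕ → Set Y,
        IsSchemeExtension Y T (fun t => closure (e '' H t)) E ∧ E [] = Set.range e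

/-! ### Canonical trees -/

/-- Auxiliary indices for the canonical trees: at a successor `a = b + 1` every index is
`b`, and at a countable limit the indices enumerate all ordinals `< a` injectively. -/
def canonIdx (a : Ordinal.{0}) (n : ℕ) : Ordinal.{0} :=
  if hs : ∃ b, a = b + 1 then hs.choose
  else if hf : ∃ f : ℕ → Ordinal.{0}, Function.Injective f ∧ Set.range f = Set.Iio a then
    hf.choose n
  else 0

theorem canonIdx_lt {a : Ordinal.{0}} (h0 : a ≠ 0) (n : ℕ) : canonIdx a n < a := by
  unfold canonIdx
  split
  · next hs =>
      conv_rhs => rw [hs.choose_spec]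
      rw [Ordinal.add_one_eq_succ]
      exact Order.lt_succ _
  · split
    · next hf =>
        have hmem : hf.choose n ∈ Set.range hf.choose := Set.mem_range_self n
        rw [hf.choose_spec.2] at hmem
        exact hmem
    · exact pos_iff_ne_zero.mpr h0

/-- The canonical "maximal" trees `T_α` of leaf-rank `α < ω₁` (with `T_α = ω^{<ω}` for
`α ≥ ω₁`): `T_0 = {∅}`, `T_{α+1} = {∅} ∪ ⋃_n n⌢T_α`, and at countable limits
`T_α = {∅} ∪ ⋃_n n⌢T_{π_α(n)}` for an injective enumeration `π_α` of `α`. -/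
def canonTree : Ordinal.{0} → Set (List ℕ) :=
  WellFounded.fix Ordinal.lt_wf (C := fun _ => Set (List ℕ)) fun a ih =>
    if h0 : a = 0 then {([] : List ℕ)}
    else if omega1 ≤ a then Set.univ
    else {([] : List ℕ)} ∪ ⋃ n : ℕ, (List.cons n) '' ih (canonIdx a n) (canonIdx_lt h0 n)

/-- The canonical trees `T^c_α`: `T_{α'}` for even `α`, and `{∅} ∪ 1⌢T_{α'}` for odd `α`. -/
def canonTreeC (a : Ordinal.{0}) : Set (List ℕ) :=
  if EvenOrd a then canonTree (ordPrime a)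
  else {([] : List ℕ)} ∪ (List.cons 1) '' canonTree (ordPrime a)

/-- The canonical trees `T^c_{α,i} = {∅} ∪ i⌢T_{α'}` (for odd `α`). -/
def canonTreeCi (a : Ordinal.{0}) (i : ℕ) : Set (List ℕ) :=
  {([] : List ℕ)} ∪ (List.cons i) '' canonTree (ordPrime a)

/-! ### Admissible maps, `R_T` and regular representations -/

/-- An admissible map on a tree `T`: monotone w.r.t. extension, with
`|φ(t)| = t(0) + ⋯ + t(|t|-1)` for all `t ∈ T`. -/
def Admissible (T : Set (List ℕ)) (φ : List ℕ → List ℕ) : Prop :=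
  (∀ ⦃s t : List ℕ⦄, s ∈ T → t ∈ T → s <+: t → φ s <+: φ t) ∧
  (∀ t ∈ T, (φ t).length = t.sum)

/-- `R_T(C)`: the points of `C(∅)` admitting an admissible witness map along `T`. -/
def RT {Y : Type u} (T : Set (List ℕ)) (C : List ℕ → Set Y) : Set Y :=
  { x | x ∈ C [] ∧ ∃ φ : List ℕ → List ℕ, Admissible T φ ∧ ∀ t ∈ T, x ∈ C (φ t) }

/-- `R_α(C) = R_{T^c_α}(C)`. -/
def Ralpha {Y : Type u} (a : Ordinal.{0}) (C : List ℕ → Set Y) : Set Y :=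
  RT (canonTreeC a) C

/-- A Suslin scheme `C` of subsets of `X ⊆ Y` is *complete on `X`*: it is a Suslin scheme
on `X` (it consists of subsets of `X` and the Suslin operation applied to it covers `X`)
such that every nontrivial filter containing, for each `n`, a set `C s` with `|s| = n`,
has an accumulation point in `X`. -/
def IsCompleteOn (Y : Type u) [TopologicalSpace Y] (X : Set Y) (C : List ℕ → Set Y) :
    Prop :=
  IsSuslinScheme C ∧ (∀ s, C s ⊆ X) ∧ X ⊆ suslinOp C ∧
  ∀ F : Filter Y, F.NeBot → (∀ n : ℕ, ∃ s : List ℕ, s.length = n ∧ C s ∈ F) →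
    ∃ x ∈ X, ClusterPt x F

/-- The tree `S_C(y)` of finite sequences `s` with `y ∈ cl_Y (C s)`. -/
def SCtree (Y : Type u) [TopologicalSpace Y] (C : List ℕ → Set Y) (y : Y) :
    Set (List ℕ) :=
  { s : List ℕ | y ∈ closure (C s) }

/-! ### Zoom spaces -/

/-- The set of isolated points of a topological space. -/
def IsolPts (Y : Type u) [TopologicalSpace Y] : Set Y := { y | IsOpen ({y} : Set Y) }

/-- The underlying set of the zoom space `Z(Y, X)`: the non-isolated points of `Y`
together with the disjoint union of the spaces `X i`, `i ∈ I_Y`. -/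
def ZoomCarrier (Y : Type u) [TopologicalSpace Y] (X : IsolPts Y → Type v) :
    Type (max u v) :=
  ({ y : Y // y ∉ IsolPts Y }) ⊕ ((i : IsolPts Y) × X i)

/-- The basic set `V_U ⊆ Z(Y, X)` associated with `U ⊆ Y`:
`V_U = (U ∖ I_Y) ∪ ⋃ {X i | i ∈ U ∩ I_Y}`. -/
def zoomVSet (Y : Type u) [TopologicalSpace Y] (X : IsolPts Y → Type v) (U : Set Y) :
    Set (ZoomCarrier Y X) :=
  { z | Sum.elim (fun y : { y : Y // y ∉ IsolPts Y } => (y : Y) ∈ U)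
      (fun p : (i : IsolPts Y) × X i => (p.1 : Y) ∈ U) z }

/-- The topology of the zoom space `Z(Y, X)`, generated by the open subsets of the
spaces `X i` together with the sets `V_U` for `U` open in `Y`. -/
instance zoomTopology (Y : Type u) [TopologicalSpace Y] (X : IsolPts Y → Type v)
    [∀ i, TopologicalSpace (X i)] : TopologicalSpace (ZoomCarrier Y X) :=
  TopologicalSpace.generateFrom
    ({ B | ∃ (i : IsolPts Y) (W : Set (X i)), IsOpen W ∧
        B = Sum.inr '' ((Sigma.mk i) '' W) } ∪
     { B | ∃ U : Set Y, IsOpen U ∧ B = zoomVSet Y X U })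

/-- The subset of `Z(Y, X)` which is the underlying set of the zoom space `Z(Ys, A)` of
a subspace `Ys ⊆ Y` with respect to subspaces `A i ⊆ X i`
(here the isolated points of `Ys` are identified with those of `Y`). -/
def zoomSub (Y : Type u) [TopologicalSpace Y] (X : IsolPts Y → Type v) (Ys : Set Y)
    (A : ∀ i : IsolPts Y, Set (X i)) : Set (ZoomCarrier Y X) :=
  { z | Sum.elim (fun y : { y : Y // y ∉ IsolPts Y } => (y : Y) ∈ Ys)
      (fun p : (i : IsolPts Y) × X i => p.2 ∈ A p.1) z }

/-! ### Broom sets and broom spaces -/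

/-- A forking sequence: a sequence of nonempty finite sequences with pairwise distinct
first entries. -/
def IsForking (f : ℕ → List ℕ) : Prop :=
  (∀ n, f n ≠ []) ∧ ∀ ⦃m n : ℕ⦄, m ≠ n → (f m).head? ≠ (f n).head?

/-- The hierarchy of finite broom sets: `B ∈ B_α` iff `IsBroomB α B`.
`B_0 = {{∅}}`; for odd `α`, `B_α = B_{<α} ∪ {h⌢B | B ∈ B_{α-1}, h ∈ ω^{<ω}}`; for even
`α > 0`, `B_α = B_{<α} ∪ {⋃_n f_n⌢B_n | B_n ∈ B_{<α}, (f_n) a forking sequence}`. -/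
inductive IsBroomB : Ordinal.{0} → Set (List ℕ) → Prop
  | base : IsBroomB 0 {[]}
  | mono {β α : Ordinal.{0}} {B : Set (List ℕ)} : β < α → IsBroomB β B → IsBroomB α B
  | odd {β : Ordinal.{0}} {B : Set (List ℕ)} (h : List ℕ) : EvenOrd β → IsBroomB β B →
      IsBroomB (β + 1) ((fun s => h ++ s) '' B)
  | even {α : Ordinal.{0}} {f : ℕ → List ℕ} {Bs : ℕ → Set (List ℕ)}
      (g : ℕ → Ordinal.{0}) :
      0 < α → EvenOrd α → IsForking f →
      (∀ n : ℕ, g n < α) → (∀ n : ℕ, IsBroomB (g n) (Bs n)) →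
      IsBroomB α (⋃ n : ℕ, (fun s => f n ++ s) '' Bs n)

/-- The infinite sequence `s⌢ν` obtained by extending the finite sequence `s` by `ν`. -/
def seqAppend (s : List ℕ) (ν : ℕ → ℕ) : ℕ → ℕ :=
  fun k => if h : k < s.length then s.get ⟨k, h⟩ else ν (k - s.length)

/-- `A` is a broom-extension of `B`:
`A = {s⌢f^s_n⌢ν^s_n | s ∈ B, n ∈ ω}` for forking sequences `(f^s_n)_n, s ∈ B`, and
points `ν^s_n ∈ ω^ω`. -/
def IsBroomExtension (B : Set (List ℕ)) (A : Set (ℕ → ℕ)) : Prop :=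
  ∃ (f : List ℕ → ℕ → List ℕ) (ν : List ℕ → ℕ → (ℕ → ℕ)),
    (∀ s ∈ B, IsForking (f s)) ∧
    A = { σ : ℕ → ℕ | ∃ s ∈ B, ∃ n : ℕ, σ = seqAppend (s ++ f s n) (ν s n) }

/-- The hierarchy of infinite broom sets: `A ∈ A_α` iff `A` is a broom-extension of some
`B ∈ B_α`. -/
def IsBroomA (α : Ordinal.{0}) (A : Set (ℕ → ℕ)) : Prop :=
  ∃ B : Set (List ℕ), IsBroomB α B ∧ IsBroomExtension B A

/-- `u` is a finite initial segment of the infinite sequence `σ`. -/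
def InfExtends (u : List ℕ) (σ : ℕ → ℕ) : Prop := seqPrefix σ u.length = u

/-- The tree of all finite initial segments of members of a set of infinite sequences. -/
def clTrInf (S : Set (ℕ → ℕ)) : Set (List ℕ) := { u | ∃ σ ∈ S, InfExtends u σ }

/-- The broom space `T_𝒜` on `ω^ω ∪ {∞}` (with `∞ = none`): every point of `ω^ω` is
isolated, and the neighborhood subbasis at `∞` consists of the complements of single
points of `ω^ω` and of the complements of the sets `A ∈ 𝒜`. -/
def broomTop (𝒜 : Set (Set (ℕ → ℕ))) : TopologicalSpace (Option (ℕ → ℕ)) :=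
  TopologicalSpace.generateFrom
    ({ S | ∃ σ : ℕ → ℕ, S = {Option.some σ} } ∪
     { S | ∃ σ : ℕ → ℕ, S = insert Option.none (Option.some '' ({σ}ᶜ)) } ∪
     { S | ∃ A ∈ 𝒜, S = insert Option.none (Option.some '' Aᶜ) })


/-!
For `y ∉ X` the tree `S_C(y)` is well-founded, because `A(C̄^Y) = X`. In a well-founded tree
a node survives one `D_iie`-derivative iff it has extensions of every length: a maximal node
with extensions of unbounded length has immediate successors of finite but unbounded heights,
and extensions through them of ever greater length are pairwise incomparable. By induction
along the canonical trees, an admissible map of `T_γ` into `S_C(y)` above `s` therefore exists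
iff `s ∈ D_iie^γ(S_C(y))`, and unfolding `R_α` through `T^c_α` gives (i)–(iii).
-/

section Trees

variable {T S : Set (List ℕ)}

theorem isTree_clTr (S : Set (List ℕ)) : IsTree (clTr S) :=
  fun _ _ hst ⟨u, hu, htu⟩ => ⟨u, hu, hst.trans htu⟩

theorem IsTree.clTr_eq (hT : IsTree T) : clTr T = T :=
  Set.Subset.antisymm (fun _ ⟨_, ht, hut⟩ => hT hut ht) fun t ht => ⟨t, ht, List.prefix_rfl⟩

theorem IsTree.nil_mem_iff_ne_empty (hT : IsTree T) : [] ∈ T ↔ T ≠ ∅ := by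
  rw [← Set.nonempty_iff_ne_empty]
  exact ⟨fun h => ⟨_, h⟩, fun ⟨_, ht⟩ => hT List.nil_prefix ht⟩

theorem IsTree.singleton_nil_ssubset_iff (hT : IsTree T) :
    {[]} ⊂ T ↔ ∃ s ∈ T, s.length = 1 := by
  constructor
  · intro h
    obtain ⟨s, hs, hne : s ≠ []⟩ := Set.exists_of_ssubset h
    refine ⟨s.take 1, hT (List.take_prefix _ _) hs, ?_⟩
    simpa [Nat.one_le_iff_ne_zero] using hne
  · rintro ⟨s, hs, hlen⟩
    refine Set.ssubset_iff_subset_ne.mpr ⟨?_, fun h => ?_⟩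
    · rintro _ rfl
      exact hT List.nil_prefix hs
    · rw [← h, Set.mem_singleton_iff] at hs
      simp [hs] at hlen

theorem WellFoundedTree.mono (h : S ⊆ T) (hT : WellFoundedTree T) : WellFoundedTree S :=
  fun ⟨σ, hσ⟩ => hT ⟨σ, fun k => h (hσ k)⟩

theorem WellFoundedTree.wellFounded_extension (hT : IsTree T) (hwf : WellFoundedTree T) :
    WellFounded fun u t : List ℕ => u ∈ T ∧ t <+: u ∧ t.length < u.length := by
  rw [wellFounded_iff_isEmpty_descending_chain]
  refine ⟨fun ⟨c, hc⟩ => hwf ⟨fun n => (c (n + 1)).getD n 0, fun k => ?_⟩⟩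
  have hchain : ∀ {j k}, j ≤ k → c j <+: c k := by
    intro j k hjk
    induction k, hjk using Nat.le_induction with
    | base => exact List.prefix_rfl
    | succ k _ ih => exact ih.trans (hc k).2.1
  have hlen : ∀ k, k ≤ (c k).length := by
    intro k
    induction k with
    | zero => omega
    | succ k ih => have := (hc k).2.2; omega
  suffices seqPrefix (fun n => (c (n + 1)).getD n 0) k = (c (k + 1)).take k from
    this ▸ hT (List.take_prefix _ _) (hc k).1
  refine List.ext_getElem (by simp [seqPrefix]; have := hlen (k + 1); omega) fun i hi _ => ?_
  have hi : i < k := by simpa [seqPrefix] using hi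
  have hi' : i < (c (i + 1)).length := by have := hlen (i + 1); omega
  simp only [seqPrefix, List.getElem_ofFn, List.getElem_take, List.getD_eq_getElem _ _ hi']
  exact (hchain (show i + 1 ≤ k + 1 by omega)).getElem hi'

end Trees

section Diie

variable {T : Set (List ℕ)} {s t : List ℕ}

theorem diie_subset (T : Set (List ℕ)) : Diie T ⊆ T := fun _ ht => ht.1

theorem IsTree.diie (hT : IsTree T) : IsTree (Diie T) :=
  fun _ _ hst ⟨htT, g, hg, hinc⟩ =>
    ⟨hT hst htT, g, fun n => ⟨(hg n).1, hst.trans (hg n).2⟩, hinc⟩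

theorem IsTree.exists_extension_of_mem_diie (hT : IsTree T) (hs : s ∈ Diie T) (n : ℕ) :
    ∃ t ∈ T, s <+: t ∧ t.length = s.length + n := by
  obtain ⟨-, g, hg, hinc⟩ := hs
  have hinj : Function.Injective fun k => (g k).length := by
    intro j k hjk
    by_contra hne
    rcases Nat.lt_or_gt_of_ne hne with h | h
    exacts [(hinc h).2.2 hjk, (hinc h).2.2 hjk.symm]
  obtain ⟨k, hk⟩ := (Filter.tendsto_atTop.mp hinj.nat_tendsto_atTop (s.length + n)).exists
  refine ⟨(g k).take (s.length + n), hT (List.take_prefix _ _) (hg k).1, ?_, by simpa using hk⟩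
  exact List.prefix_take_iff.mpr ⟨(hg k).2, by omega⟩

/-- The sequences `g k` are picked of increasing length, each longer than the height of the
immediate successor of `t` through which its predecessor passes; so no `g k` extends an
earlier `g j`. -/
theorem mem_diie_of_forall_extension_bounded (hT : IsTree T) (ht : t ∈ T)
    (hunb : ∀ n, ∃ u ∈ T, t <+: u ∧ n ≤ u.length)
    (hbdd : ∀ w ∈ T, t <+: w → t.length < w.length →
      ∃ N, ∀ u ∈ T, w <+: u → u.length < N) :
    t ∈ Diie T := by
  choose u huT htu hlen using hunb
  have : ∀ w, ∃ N, w ∈ T → t <+: w → t.length < w.length →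
      ∀ v ∈ T, w <+: v → v.length < N := by
    intro w
    by_cases hw : w ∈ T ∧ t <+: w ∧ t.length < w.length
    · obtain ⟨N, hN⟩ := hbdd w hw.1 hw.2.1 hw.2.2
      exact ⟨N, fun _ _ _ => hN⟩
    · exact ⟨0, fun h1 h2 h3 => absurd ⟨h1, h2, h3⟩ hw⟩
  choose height hheight using this
  let g (k : ℕ) : List ℕ :=
    Nat.rec (u (t.length + 1)) (fun _ v => u (max v.length (height (v.take (t.length + 1))) + 1)) k
  have hg_lt (k : ℕ) : (g k).length < (g (k + 1)).length ∧
      height ((g k).take (t.length + 1)) < (g (k + 1)).length := by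
    have := hlen (max (g k).length (height ((g k).take (t.length + 1))) + 1)
    have hsucc : g (k + 1) = u (max (g k).length (height ((g k).take (t.length + 1))) + 1) := rfl
    rw [hsucc]
    omega
  have hg_mono : StrictMono fun k => (g k).length := strictMono_nat_of_lt_succ fun k => (hg_lt k).1
  have hg_long (k : ℕ) : t.length < (g k).length :=
    (hlen (t.length + 1)).trans (hg_mono.monotone k.zero_le)
  have hgT (k : ℕ) : g k ∈ T := by cases k <;> exact huT _
  have htg (k : ℕ) : t <+: g k := by cases k <;> exact htu _
  have hnot_prefix {j k : ℕ} (hjk : j < k) : ¬ g j <+: g k := by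
    intro hpre
    have hchild : (g j).take (t.length + 1) <+: g j := List.take_prefix _ _
    have hbound := hheight _ (hT hchild (hgT j)) (List.prefix_take_iff.mpr ⟨htg j, by omega⟩)
      (by simpa using hg_long j) (g k) (hgT k) (hchild.trans hpre)
    have := (hg_lt j).2
    have : (g (j + 1)).length ≤ (g k).length := hg_mono.monotone hjk
    omega
  refine ⟨ht, g, fun k => ⟨hgT k, htg k⟩,
    fun j k hjk => ⟨hnot_prefix hjk, fun h => ?_, (hg_mono hjk).ne⟩⟩
  have : (g j).length < (g k).length := hg_mono hjk
  have := h.length_le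
  omega

theorem mem_diie_iff (hT : IsTree T) (hwf : WellFoundedTree T) :
    s ∈ Diie T ↔ ∀ n, ∃ t ∈ T, s <+: t ∧ t.length = s.length + n := by
  refine ⟨hT.exists_extension_of_mem_diie, fun h => ?_⟩
  let Unbounded (t : List ℕ) : Prop := ∀ n, ∃ u ∈ T, t <+: u ∧ n ≤ u.length
  have hs : s ∈ T ∧ Unbounded s := by
    refine ⟨?_, fun n => ?_⟩
    · obtain ⟨t, ht, hst, hlen⟩ := h 0
      rwa [hst.eq_of_length (by omega)]
    · obtain ⟨t, ht, hst, hlen⟩ := h n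
      exact ⟨t, ht, hst, by omega⟩
  obtain ⟨t, ⟨htT, hst, htunb⟩, hmax⟩ := (hwf.wellFounded_extension hT).has_min
    {t | t ∈ T ∧ s <+: t ∧ Unbounded t} ⟨s, hs.1, List.prefix_rfl, hs.2⟩
  refine hT.diie hst (mem_diie_of_forall_extension_bounded hT htT htunb fun w hw htw hlt => ?_)
  by_contra! hunb
  exact hmax w ⟨hw, hst.trans htw, fun n => by simpa using hunb n⟩ ⟨hw, htw, hlt⟩

end Diie

section IterDeriv

variable {D : Set (List ℕ) → Set (List ℕ)} (S : Set (List ℕ))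

theorem iterDeriv_zero : iterDeriv D S 0 = clTr S :=
  Ordinal.limitRecOn_zero _ _ _

theorem iterDeriv_add_one (b : Ordinal.{0}) : iterDeriv D S (b + 1) = D (iterDeriv D S b) :=
  Ordinal.limitRecOn_add_one _ _ _ _

theorem iterDeriv_limit {a : Ordinal.{0}} (ha : Order.IsSuccLimit a) :
    iterDeriv D S a = ⋂ b < a, iterDeriv D S b :=
  Ordinal.limitRecOn_limit _ _ _ _ ha

theorem isTree_iterDeriv (hD : ∀ T, IsTree T → IsTree (D T)) (γ : Ordinal.{0}) :
    IsTree (iterDeriv D S γ) := by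
  induction γ using Ordinal.limitRecOn with
  | zero => rw [iterDeriv_zero]; exact isTree_clTr S
  | add_one b ih => rw [iterDeriv_add_one]; exact hD _ ih
  | limit a ha ih =>
    rw [iterDeriv_limit S ha]
    intro s t hst ht
    simp only [Set.mem_iInter] at ht ⊢
    exact fun b hb => ih b hb hst (ht b hb)

theorem iterDeriv_subset_clTr (hD : ∀ T, D T ⊆ T) (γ : Ordinal.{0}) :
    iterDeriv D S γ ⊆ clTr S := by
  induction γ using Ordinal.limitRecOn with
  | zero => rw [iterDeriv_zero]
  | add_one b ih => rw [iterDeriv_add_one]; exact (hD _).trans ih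
  | limit a ha ih =>
    rw [iterDeriv_limit S ha]
    exact (Set.iInter₂_subset 0 ha.pos).trans (ih 0 ha.pos)

theorem isTree_iterDeriv_diie (γ : Ordinal.{0}) : IsTree (iterDeriv Diie S γ) :=
  isTree_iterDeriv S (fun _ => IsTree.diie) γ

theorem IsTree.iterDeriv_diie_subset {S : Set (List ℕ)} (hS : IsTree S) (γ : Ordinal.{0}) :
    iterDeriv Diie S γ ⊆ S :=
  (iterDeriv_subset_clTr S diie_subset γ).trans hS.clTr_eq.subset

theorem exists_extension_of_mem_iterDeriv_add {b : Ordinal.{0}} {n : ℕ} {s : List ℕ}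
    (hs : s ∈ iterDeriv Diie S (b + n)) :
    ∃ t ∈ iterDeriv Diie S b, s <+: t ∧ t.length = s.length + n := by
  induction n generalizing b s with
  | zero => exact ⟨s, by simpa using hs, List.prefix_rfl, rfl⟩
  | succ n ih =>
    rw [Nat.add_comm, Nat.cast_add, Nat.cast_one, ← add_assoc] at hs
    obtain ⟨t, ht, hst, hlen⟩ := ih hs
    rw [iterDeriv_add_one] at ht
    obtain ⟨u, hu, htu, hlen'⟩ :=
      (isTree_iterDeriv_diie S b).exists_extension_of_mem_diie ht 1
    exact ⟨u, hu, hst.trans htu, by omega⟩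

end IterDeriv

section CanonicalTrees

theorem ordPrime_le (a : Ordinal.{0}) : ordPrime a ≤ a := by
  have hhalf : a % ω / 2 ≤ a % ω :=
    calc a % ω / 2 ≤ 2 * (a % ω / 2) := le_mul_of_one_le_left' one_le_two
      _ ≤ a % ω := Ordinal.mul_div_le _ _
  calc ordPrime a ≤ ω * (a / ω) + a % ω := add_le_add_right hhalf _
    _ = a := Ordinal.div_add_mod a _

theorem exists_injective_range_eq_Iio {a : Ordinal.{0}} (ha : Order.IsSuccLimit a)
    (h : a < omega1) :
    ∃ f : ℕ → Ordinal.{0}, Function.Injective f ∧ Set.range f = Set.Iio a := by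
  have : Countable (Set.Iio a) := by
    rw [← Cardinal.mk_le_aleph0_iff, Cardinal.mk_Iio_ordinal, Cardinal.lift_le_aleph0,
      ← Cardinal.lt_aleph_one_iff]
    exact Cardinal.lt_omega_iff_card_lt.mp h
  have : Infinite (Set.Iio a) := Set.infinite_coe_iff.mpr <|
    Set.infinite_of_injective_forall_mem Nat.cast_injective (Ordinal.natCast_lt_of_isSuccLimit ha)
  obtain ⟨e⟩ := nonempty_equiv_of_countable (α := ℕ) (β := Set.Iio a)
  exact ⟨fun n => e n, Subtype.val_injective.comp e.injective, by
    rw [Set.range_comp' Subtype.val e, e.range_eq_univ, Set.image_univ, Subtype.range_coe]⟩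

theorem canonIdx_add_one (b : Ordinal.{0}) (n : ℕ) : canonIdx (b + 1) n = b := by
  have hs : ∃ c, b + 1 = c + 1 := ⟨b, rfl⟩
  rw [canonIdx, dif_pos hs]
  exact Order.succ_injective (by simpa only [Order.succ_eq_add_one] using hs.choose_spec.symm)

theorem exists_canonIdx_eq {a b : Ordinal.{0}} (ha : Order.IsSuccLimit a) (h : a < omega1)
    (hb : b < a) : ∃ n, canonIdx a n = b := by
  have hns : ¬ ∃ c, a = c + 1 := by
    rintro ⟨c, rfl⟩
    exact Order.not_isSuccLimit_succ c (Order.succ_eq_add_one c ▸ ha)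
  have hf := exists_injective_range_eq_Iio ha h
  unfold canonIdx
  simp only [dif_neg hns, dif_pos hf]
  rw [← Set.mem_range, hf.choose_spec.2]
  exact hb

def joinTrees (I : Set ℕ) (F : ℕ → Set (List ℕ)) : Set (List ℕ) :=
  {[]} ∪ ⋃ n ∈ I, List.cons n '' F n

theorem nil_mem_joinTrees (I : Set ℕ) (F : ℕ → Set (List ℕ)) : [] ∈ joinTrees I F :=
  Or.inl rfl

theorem cons_mem_joinTrees {I : Set ℕ} {F : ℕ → Set (List ℕ)} {n : ℕ} {t : List ℕ} :
    n :: t ∈ joinTrees I F ↔ n ∈ I ∧ t ∈ F n := by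
  simp [joinTrees, and_comm]

theorem canonTree_zero : canonTree 0 = {[]} := by
  rw [canonTree, WellFounded.fix_eq, dif_pos rfl]

theorem canonTree_eq_joinTrees {a : Ordinal.{0}} (h0 : a ≠ 0) (h1 : a < omega1) :
    canonTree a = joinTrees Set.univ fun n => canonTree (canonIdx a n) := by
  rw [canonTree, WellFounded.fix_eq, dif_neg h0, if_neg (not_le.mpr h1), joinTrees,
    Set.biUnion_univ]

theorem nil_mem_canonTree (a : Ordinal.{0}) : [] ∈ canonTree a := by
  rw [canonTree, WellFounded.fix_eq]
  split_ifs
  exacts [rfl, trivial, Or.inl rfl]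

theorem canonTreeC_eq_canonTreeCi_of_odd {a : Ordinal.{0}} (ha : OddOrd a) :
    canonTreeC a = canonTreeCi a 1 :=
  if_neg fun heven => zero_ne_one (heven.symm.trans ha)

theorem canonTreeCi_eq_joinTrees (a : Ordinal.{0}) (i : ℕ) :
    canonTreeCi a i = joinTrees {i} fun _ => canonTree (ordPrime a) := by
  rw [canonTreeCi, joinTrees, Set.biUnion_singleton]

end CanonicalTrees

section AdmissibleAbove

/-- Admissible maps of `T` into `S` relative to the root `s`; `R_T` is the case `s = []`. -/
def AdmissibleAbove (T S : Set (List ℕ)) (s : List ℕ) : Prop :=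
  ∃ φ : List ℕ → List ℕ,
    (∀ ⦃u v : List ℕ⦄, u ∈ T → v ∈ T → u <+: v → φ u <+: φ v) ∧
    ∀ t ∈ T, φ t ∈ S ∧ s <+: φ t ∧ (φ t).length = s.length + t.sum

variable {T S : Set (List ℕ)} {s : List ℕ}

theorem AdmissibleAbove.mem (h : AdmissibleAbove T S s) (hT : [] ∈ T) : s ∈ S := by
  obtain ⟨φ, -, hφ⟩ := h
  obtain ⟨hS, hpre, hlen⟩ := hφ [] hT
  rwa [hpre.eq_of_length (by simpa using hlen.symm)]

theorem admissibleAbove_singleton_nil : AdmissibleAbove {[]} S s ↔ s ∈ S := by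
  refine ⟨fun h => h.mem rfl, fun hs => ⟨fun _ => s, fun _ _ _ _ _ => List.prefix_rfl, ?_⟩⟩
  rintro _ rfl
  exact ⟨hs, List.prefix_rfl, rfl⟩

theorem AdmissibleAbove.exists_child {I : Set ℕ} {F : ℕ → Set (List ℕ)}
    (h : AdmissibleAbove (joinTrees I F) S s) {n : ℕ} (hn : n ∈ I) (hF : [] ∈ F n) :
    ∃ s', s <+: s' ∧ s'.length = s.length + n ∧ AdmissibleAbove (F n) S s' := by
  obtain ⟨φ, hmono, hφ⟩ := h
  have hroot : φ [] = s := by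
    obtain ⟨-, hpre, hlen⟩ := hφ [] (nil_mem_joinTrees I F)
    exact (hpre.eq_of_length (by simpa using hlen.symm)).symm
  have hnT : [n] ∈ joinTrees I F := cons_mem_joinTrees.mpr ⟨hn, hF⟩
  have hlen : (φ [n]).length = s.length + n := by simpa using (hφ [n] hnT).2.2
  refine ⟨φ [n], hroot ▸ hmono (nil_mem_joinTrees I F) hnT List.nil_prefix, hlen,
    fun t => φ (n :: t), fun u v hu hv huv => ?_, fun t ht => ?_⟩
  · exact hmono (cons_mem_joinTrees.mpr ⟨hn, hu⟩) (cons_mem_joinTrees.mpr ⟨hn, hv⟩)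
      (List.cons_prefix_cons.mpr ⟨rfl, huv⟩)
  · have htT : n :: t ∈ joinTrees I F := cons_mem_joinTrees.mpr ⟨hn, ht⟩
    obtain ⟨hS, -, hlen'⟩ := hφ _ htT
    refine ⟨hS, hmono hnT htT (List.cons_prefix_cons.mpr ⟨rfl, List.nil_prefix⟩), ?_⟩
    rw [hlen', hlen, List.sum_cons, add_assoc]

theorem AdmissibleAbove.joinTrees {I : Set ℕ} {F : ℕ → Set (List ℕ)} (hs : s ∈ S)
    (hchild : ∀ n ∈ I, ∃ s', s <+: s' ∧ s'.length = s.length + n ∧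
      AdmissibleAbove (F n) S s') :
    AdmissibleAbove (joinTrees I F) S s := by
  have : ∀ n, ∃ (s' : List ℕ) (φ : List ℕ → List ℕ), n ∈ I →
      s <+: s' ∧ s'.length = s.length + n ∧
      (∀ ⦃u v : List ℕ⦄, u ∈ F n → v ∈ F n → u <+: v → φ u <+: φ v) ∧
      ∀ t ∈ F n, φ t ∈ S ∧ s' <+: φ t ∧ (φ t).length = s'.length + t.sum := by
    intro n
    by_cases hn : n ∈ I
    · obtain ⟨s', hss', hlen, φ, hφ⟩ := hchild n hn
      exact ⟨s', φ, fun _ => ⟨hss', hlen, hφ⟩⟩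
    · exact ⟨[], id, fun h => absurd h hn⟩
  choose s' φ hφ using this
  refine ⟨fun | [] => s | n :: t => φ n t, fun u v hu hv huv => ?_, fun t ht => ?_⟩
  · match u, v, huv with
    | [], [], _ => exact List.prefix_rfl
    | [], n :: t, _ =>
      obtain ⟨hn, ht⟩ := cons_mem_joinTrees.mp hv
      exact (hφ n hn).1.trans ((hφ n hn).2.2.2 t ht).2.1
    | n :: t, m :: t', huv =>
      obtain ⟨rfl, htt⟩ := List.cons_prefix_cons.mp huv
      obtain ⟨hn, ht⟩ := cons_mem_joinTrees.mp hu
      exact (hφ n hn).2.2.1 ht (cons_mem_joinTrees.mp hv).2 htt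
  · match t, ht with
    | [], _ => exact ⟨hs, List.prefix_rfl, rfl⟩
    | n :: t, ht =>
      obtain ⟨hn, ht⟩ := cons_mem_joinTrees.mp ht
      obtain ⟨hss', hlen, -, hφ'⟩ := hφ n hn
      obtain ⟨hS, hpre, hlen'⟩ := hφ' t ht
      refine ⟨hS, hss'.trans hpre, ?_⟩
      rw [hlen', hlen, List.sum_cons, add_assoc]

theorem admissibleAbove_joinTrees_iff {I : Set ℕ} {F : ℕ → Set (List ℕ)}
    (hF : ∀ n ∈ I, [] ∈ F n) :
    AdmissibleAbove (joinTrees I F) S s ↔ s ∈ S ∧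
      ∀ n ∈ I, ∃ s', s <+: s' ∧ s'.length = s.length + n ∧
        AdmissibleAbove (F n) S s' :=
  ⟨fun h => ⟨h.mem (nil_mem_joinTrees I F), fun _ hn => h.exists_child hn (hF _ hn)⟩,
    fun ⟨hs, hchild⟩ => AdmissibleAbove.joinTrees hs hchild⟩

end AdmissibleAbove

/-- At a limit `γ`, a point of every `D_iie^b` (`b < γ`) lies in `D_iie^{π_γ(n) + n}` and hence
has an extension of length `|s| + n` in `D_iie^{π_γ(n)}`. -/
theorem admissibleAbove_canonTree_iff {S : Set (List ℕ)} (hS : IsTree S)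
    (hwf : WellFoundedTree S) {γ : Ordinal.{0}} (hγ : γ < omega1) {s : List ℕ} :
    AdmissibleAbove (canonTree γ) S s ↔ s ∈ iterDeriv Diie S γ := by
  induction γ using Ordinal.limitRecOn generalizing s with
  | zero => rw [canonTree_zero, admissibleAbove_singleton_nil, iterDeriv_zero, hS.clTr_eq]
  | add_one b ih =>
    rw [canonTree_eq_joinTrees (by simp) hγ,
      admissibleAbove_joinTrees_iff fun n _ => nil_mem_canonTree _, iterDeriv_add_one,
      mem_diie_iff (isTree_iterDeriv_diie S b) (hwf.mono (hS.iterDeriv_diie_subset b))]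
    simp only [canonIdx_add_one, Set.mem_univ, true_implies, ih ((lt_add_one b).trans hγ)]
    refine ⟨fun ⟨_, h⟩ n => ?_, fun h => ⟨?_, fun n => ?_⟩⟩
    · obtain ⟨t, hst, hlen, ht⟩ := h n
      exact ⟨t, ht, hst, hlen⟩
    · obtain ⟨t, ht, hst, hlen⟩ := h 0
      exact hst.eq_of_length hlen.symm ▸ hS.iterDeriv_diie_subset b ht
    · obtain ⟨t, ht, hst, hlen⟩ := h n
      exact ⟨t, hst, hlen, ht⟩
  | limit γ hlim ih =>
    have hidx (n : ℕ) : canonIdx γ n < γ := canonIdx_lt hlim.ne_zero n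
    have ih' (n : ℕ) (t : List ℕ) := ih _ (hidx n) ((hidx n).trans hγ) (s := t)
    rw [canonTree_eq_joinTrees hlim.ne_zero hγ,
      admissibleAbove_joinTrees_iff fun n _ => nil_mem_canonTree _, iterDeriv_limit S hlim]
    simp only [Set.mem_univ, true_implies, Set.mem_iInter, ih']
    refine ⟨fun ⟨_, h⟩ b hb => ?_,
      fun h => ⟨hS.iterDeriv_diie_subset 0 (h 0 hlim.pos), fun n => ?_⟩⟩
    · obtain ⟨n, rfl⟩ := exists_canonIdx_eq hlim hγ hb
      obtain ⟨t, hst, -, ht⟩ := h n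
      exact isTree_iterDeriv_diie S _ hst ht
    · obtain ⟨t, ht, hst, hlen⟩ :=
        exists_extension_of_mem_iterDeriv_add S (h _ (hlim.add_natCast_lt (hidx n) n))
      exact ⟨t, hst, hlen, ht⟩

section Schemes

variable {Y : Type*} {D : List ℕ → Set Y} {x : Y}

theorem IsSuslinScheme.closure [TopologicalSpace Y] {C : List ℕ → Set Y}
    (hC : IsSuslinScheme C) : IsSuslinScheme fun s => closure (C s) :=
  fun _ _ h => closure_mono (hC h)

theorem IsSuslinScheme.isTree_setOf_mem (hD : IsSuslinScheme D) (x : Y) :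
    IsTree {s | x ∈ D s} :=
  fun _ _ h hx => hD h hx

theorem wellFoundedTree_setOf_mem (hx : x ∉ suslinOp D) : WellFoundedTree {s | x ∈ D s} :=
  fun ⟨σ, hσ⟩ => hx (Set.mem_iUnion.mpr ⟨σ, Set.mem_iInter.mpr hσ⟩)

theorem mem_RT_iff {T : Set (List ℕ)} :
    x ∈ RT T D ↔ x ∈ D [] ∧ AdmissibleAbove T {s | x ∈ D s} [] := by
  constructor
  · rintro ⟨hx, φ, ⟨hmono, hlen⟩, hφ⟩
    exact ⟨hx, φ, hmono, fun t ht => ⟨hφ t ht, List.nil_prefix, by simp [hlen t ht]⟩⟩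
  · rintro ⟨hx, φ, hmono, hφ⟩
    exact ⟨hx, φ, ⟨hmono, fun t ht => by simpa using (hφ t ht).2.2⟩,
      fun t ht => (hφ t ht).1⟩

theorem mem_RT_canonTree_iff (hD : IsSuslinScheme D) (hx : x ∉ suslinOp D) {γ : Ordinal.{0}}
    (hγ : γ < omega1) :
    x ∈ RT (canonTree γ) D ↔ iterDeriv Diie {s | x ∈ D s} γ ≠ ∅ := by
  rw [mem_RT_iff, admissibleAbove_canonTree_iff (hD.isTree_setOf_mem x)
    (wellFoundedTree_setOf_mem hx) hγ, ← (isTree_iterDeriv_diie _ γ).nil_mem_iff_ne_empty]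
  exact and_iff_right_of_imp fun h => (hD.isTree_setOf_mem x).iterDeriv_diie_subset γ h

theorem mem_RT_canonTreeCi_iff (hD : IsSuslinScheme D) (hx : x ∉ suslinOp D)
    {α : Ordinal.{0}} (hα : α < omega1) (i : ℕ) :
    x ∈ RT (canonTreeCi α i) D ↔
      ∃ s ∈ iterDeriv Diie {s | x ∈ D s} (ordPrime α), s.length = i := by
  have hα' : ordPrime α < omega1 := (ordPrime_le α).trans_lt hα
  rw [canonTreeCi_eq_joinTrees, mem_RT_iff,
    admissibleAbove_joinTrees_iff fun _ _ => nil_mem_canonTree _]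
  simp only [Set.mem_singleton_iff, forall_eq, List.nil_prefix, true_and, List.length_nil,
    zero_add,
    admissibleAbove_canonTree_iff (hD.isTree_setOf_mem x) (wellFoundedTree_setOf_mem hx) hα']
  refine ⟨fun ⟨_, _, s, hlen, hs⟩ => ⟨s, hs, hlen⟩, fun ⟨s, hs, hlen⟩ => ?_⟩
  have hroot : x ∈ D [] :=
    hD List.nil_prefix ((hD.isTree_setOf_mem x).iterDeriv_diie_subset _ hs)
  exact ⟨hroot, hroot, s, hlen, hs⟩

end Schemes

theorem regular_representation_remainder_general (Y : Type u) [TopologicalSpace Y] (X : Set Y)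
    (C : List ℕ → Set Y) (hmono : IsSuslinScheme C)
    (hA : suslinOp (fun s => closure (C s)) = X)
    (α : Ordinal.{0}) (hα : α < omega1) :
    (EvenOrd α →
      Ralpha α (fun s => closure (C s)) \ X =
        { y : Y | y ∉ X ∧ iterDeriv Diie (SCtree Y C y) (ordPrime α) ≠ ∅ }) ∧
    (OddOrd α →
      Ralpha α (fun s => closure (C s)) \ X =
        { y : Y | y ∉ X ∧
            {([] : List ℕ)} ⊂ iterDeriv Diie (SCtree Y C y) (ordPrime α) }) ∧
    (OddOrd α → ∀ i : ℕ,
      RT (canonTreeCi α i) (fun s => closure (C s)) \ X =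
        { y : Y | y ∉ X ∧
            ∃ s ∈ iterDeriv Diie (SCtree Y C y) (ordPrime α), s.length = i }) := by
  subst hA
  have hα' : ordPrime α < omega1 := (ordPrime_le α).trans_lt hα
  refine ⟨fun heven => ?_, fun hodd => ?_, fun _ i => ?_⟩ <;> ext y <;>
    refine and_comm.trans (and_congr_right fun hy => ?_)
  · rw [Ralpha, canonTreeC, if_pos heven]
    exact mem_RT_canonTree_iff hmono.closure hy hα'
  · rw [Ralpha, canonTreeC_eq_canonTreeCi_of_odd hodd, mem_RT_canonTreeCi_iff hmono.closure hy hα]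
    exact (isTree_iterDeriv_diie _ _).singleton_nil_ssubset_iff.symm
  · exact mem_RT_canonTreeCi_iff hmono.closure hy hα i

/-- Description of the remainder of a regular representation via the
derivative `D_iie`: for a Suslin scheme `C` on `X ⊆ Y` with `A(C̄^Y) = X` and `α < ω₁`:
(i) for even `α`, `R_α(C,Y) ∖ X` consists of the `y ∉ X` with
`D_iie^{α'}(S_C(y)) ≠ ∅`; (ii) for odd `α`, of the `y ∉ X` for which
`D_iie^{α'}(S_C(y))` strictly contains `{∅}`; (iii) for odd `α` and any `i`,
`R_{T^c_{α,i}}(C,Y) ∖ X` consists of the `y ∉ X` for which `D_iie^{α'}(S_C(y))` contains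
a sequence of length `i`. -/
theorem regular_representation_remainder (Y : Type u) [TopologicalSpace Y] (X : Set Y)
    (C : List ℕ → Set Y) (hmono : IsSuslinScheme C) (hsub : ∀ s, C s ⊆ X)
    (hcov : X ⊆ suslinOp C) (hA : suslinOp (fun s => closure (C s)) = X)
    (α : Ordinal.{0}) (hα : α < omega1) :
    (EvenOrd α →
      Ralpha α (fun s => closure (C s)) \ X =
        { y : Y | y ∉ X ∧ iterDeriv Diie (SCtree Y C y) (ordPrime α) ≠ ∅ }) ∧
    (OddOrd α →
      Ralpha α (fun s => closure (C s)) \ X =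
        { y : Y | y ∉ X ∧
            {([] : List ℕ)} ⊂ iterDeriv Diie (SCtree Y C y) (ordPrime α) }) ∧
    (OddOrd α → ∀ i : ℕ,
      RT (canonTreeCi α i) (fun s => closure (C s)) \ X =
        { y : Y | y ∉ X ∧
            ∃ s ∈ iterDeriv Diie (SCtree Y C y) (ordPrime α), s.length = i }) :=
  regular_representation_remainder_general Y X C hmono hA α hα

end FBorelPaper
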